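/- The generalized degenerate Bernoulli numbers of order p = -1 satisfy β_{n,λ}^{(-1)} = (λ-1)_{n,λ} for all n ≥ 0, where (x)_{n,λ} = x(x-λ)···(x-(n-1)λ). -/

import Mathlib

open Finset PowerSeries

noncomputable section

/-- The generalized (degenerate) falling factorial `(x)_{n,λ} = ∏_{j<n} (x - jλ)`. -/
def dfall (x : ℝ) (n : ℕ) (lam : ℝ) : ℝ := ∏ j ∈ Finset.range n, (x - j * lam)

/-- The degenerate exponential `e_λ^x(t) = Σ_{n≥0} (x)_{n,λ} t^n / n!` as a formal power series. -/
def degExp (lam x : ℝ) : PowerSeries ℝ :=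
  PowerSeries.mk fun n => dfall x n lam / n.factorial

/-- The degenerate Stirling numbers of the second kind, defined by
`(1/k!)(e_λ(t)-1)^k = Σ_{n≥k} S_{2,λ}(n,k) t^n/n!`. -/
def S2 (lam : ℝ) (n k : ℕ) : ℝ :=
  (n.factorial : ℝ) / (k.factorial : ℝ) * PowerSeries.coeff n ((degExp lam 1 - 1) ^ k)

/-- The degenerate Stirling polynomials of the second kind, defined by
`(1/k!)(e_λ(t)-1)^k e_λ^x(t) = Σ_{n≥k} S_{2,λ}(n,k|x) t^n/n!`. -/
def S2p (lam : ℝ) (n k : ℕ) (x : ℝ) : ℝ :=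
  (n.factorial : ℝ) / (k.factorial : ℝ) *
    PowerSeries.coeff n ((degExp lam 1 - 1) ^ k * degExp lam x)

/-- The degenerate logarithm `log_λ(1+t) = Σ_{n≥1} λ^{n-1}(1)_{n,1/λ} t^n/n!`. -/
def degLog (lam : ℝ) : PowerSeries ℝ :=
  PowerSeries.mk fun n => if n = 0 then 0 else lam ^ (n - 1) * dfall 1 n (1 / lam) / n.factorial

/-- The degenerate Stirling numbers of the first kind, defined by
`(1/k!)(log_λ(1+t))^k = Σ_{n≥k} S_{1,λ}(n,k) t^n/n!`. -/
def S1 (lam : ℝ) (n k : ℕ) : ℝ :=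
  (n.factorial : ℝ) / (k.factorial : ℝ) * PowerSeries.coeff n ((degLog lam) ^ k)

/-- Rising factorial `⟨a⟩_k = a(a+1)⋯(a+k-1)`. -/
def rising (a : ℝ) (k : ℕ) : ℝ := ∏ j ∈ Finset.range k, (a + j)

/-- The generalized degenerate Bernoulli polynomials `β_{n,λ}^{(p)}(x)`, defined by
`Σ_{n≥0} β_{n,λ}^{(p)}(x) t^n/n! = ₂F₁(1-λ,1;p+2;1-e_λ(t)) e_λ^x(t)`.
Since `1 - e_λ(t)` has zero constant term, the coefficient of `t^n` in the
hypergeometric series only involves the terms with `k ≤ n`. -/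
def genBetaPoly (lam : ℝ) (p : ℤ) (x : ℝ) (n : ℕ) : ℝ :=
  (n.factorial : ℝ) * PowerSeries.coeff n
    ((∑ k ∈ Finset.range (n + 1),
        (rising (1 - lam) k * rising 1 k / (rising ((p : ℝ) + 2) k * k.factorial)) •
          ((1 - degExp lam 1) ^ k)) * degExp lam x)

/-- The generalized degenerate Bernoulli numbers `β_{n,λ}^{(p)} = β_{n,λ}^{(p)}(0)`. -/
def genBeta (lam : ℝ) (p : ℤ) (n : ℕ) : ℝ := genBetaPoly lam p 0 n

/-- The degenerate type Eulerian numbers, defined by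
`(-1)^{n-m} A_λ(n,m) = Σ_{k=0}^{n-m} λ^k (1)_{k+1,1/λ} C(n-k,m) S_{2,λ}(n,k)`. -/
def Eul (lam : ℝ) (n m : ℕ) : ℝ :=
  (-1 : ℝ) ^ (n - m) * ∑ k ∈ Finset.range (n - m + 1),
    lam ^ k * dfall 1 (k + 1) (1 / lam) * ((n - k).choose m : ℝ) * S2 lam n k


/-!
At `p = -1` the hypergeometric series is the binomial series
`₂F₁(1-λ, 1; 1; x) = (1 - x)^{λ-1}`, so the generating function of `β_{n,λ}^{(-1)}` is
`e_λ(t)^{λ-1} = e_λ^{λ-1}(t)`. To avoid powers of series with real exponents we compare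
differential equations instead: `e_λ^x` solves `(1 + λt) F' = x F`, hence `u = 1 - e_λ(t)` solves
`(1 + λt) u' = u - 1`, and the partial sums of `∑ ⟨1-λ⟩_k u^k / k!` solve
`(1 + λt) F' = (λ - 1) F` up to a term `O(u^N)`. Comparing coefficients gives
`(n + 1) a_{n+1} = (λ - 1 - nλ) a_n`, the recursion of `(λ - 1)_{n,λ} / n!`.
-/

namespace DegenerateBernoulli

theorem dfall_succ (x : ℝ) (n : ℕ) (lam : ℝ) :
    dfall x (n + 1) lam = dfall x n lam * (x - n * lam) :=
  prod_range_succ _ _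

theorem coeff_degExp (lam x : ℝ) (n : ℕ) :
    coeff n (degExp lam x) = dfall x n lam / n.factorial :=
  coeff_mk _ _

theorem degExp_zero (lam : ℝ) : degExp lam 0 = 1 := by
  ext n
  rw [coeff_degExp, coeff_one]
  cases n with
  | zero => simp [dfall]
  | succ m => simp [dfall, prod_range_succ']

theorem coeff_one_add_C_mul_X_mul_derivative {R : Type*} [CommSemiring R] (a : R) (f : R⟦X⟧)
    (n : ℕ) :
    coeff n ((1 + C a * X) * d⁄dX R f) = (n + 1) * coeff (n + 1) f + a * n * coeff n f := by
  rw [add_mul, one_mul, mul_assoc, map_add, coeff_C_mul, coeff_derivative]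
  cases n with
  | zero => simp
  | succ n => rw [coeff_succ_X_mul, coeff_derivative]; push_cast; ring

theorem degExp_ode (lam x : ℝ) :
    (1 + C lam * X) * d⁄dX ℝ (degExp lam x) = C x * degExp lam x := by
  ext n
  rw [coeff_one_add_C_mul_X_mul_derivative, coeff_C_mul, coeff_degExp, coeff_degExp,
    dfall_succ, Nat.factorial_succ]
  have := n.factorial_ne_zero
  push_cast
  field_simp
  ring

theorem rising_one (k : ℕ) : rising 1 k = k.factorial := by
  rw [rising, ← prod_range_add_one_eq_factorial, Nat.cast_prod]
  simp only [Nat.cast_add, Nat.cast_one, add_comm]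

variable (lam : ℝ)

abbrev oneSubDegExp : ℝ⟦X⟧ := 1 - degExp lam 1

theorem oneSubDegExp_ode :
    (1 + C lam * X) * d⁄dX ℝ (oneSubDegExp lam) = oneSubDegExp lam - 1 := by
  rw [map_sub, derivative_one, zero_sub, mul_neg, degExp_ode, map_one, one_mul]
  ring

theorem X_dvd_oneSubDegExp : X ∣ oneSubDegExp lam := by
  rw [X_dvd_iff, ← coeff_zero_eq_constantCoeff_apply, map_sub, coeff_degExp]
  simp [dfall]

theorem coeff_oneSubDegExp_pow_of_lt {n k : ℕ} (h : n < k) :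
    coeff n (oneSubDegExp lam ^ k) = 0 :=
  X_pow_dvd_iff.mp (pow_dvd_pow_of_dvd (X_dvd_oneSubDegExp lam) k) n h

theorem oneSubDegExp_pow_succ_ode (k : ℕ) :
    (1 + C lam * X) * d⁄dX ℝ (oneSubDegExp lam ^ (k + 1)) =
      (k + 1 : ℝ⟦X⟧) * oneSubDegExp lam ^ k * (oneSubDegExp lam - 1) := by
  rw [Derivation.leibniz_pow, ← oneSubDegExp_ode]
  simp only [add_tsub_cancel_right, smul_eq_mul, nsmul_eq_mul]
  push_cast
  ring

-- `₂F₁(1-λ, 1; 1; x) = ∑ (⟨1-λ⟩_k / k!) x^k`, the binomial series of `(1 - x)^{λ-1}`.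
def hypCoeff (k : ℕ) : ℝ := rising (1 - lam) k / k.factorial

theorem hypCoeff_succ (k : ℕ) :
    (k + 1 : ℝ) * hypCoeff lam (k + 1) = (k + 1 - lam) * hypCoeff lam k := by
  rw [hypCoeff, hypCoeff, rising, prod_range_succ, ← rising, Nat.factorial_succ]
  have := k.factorial_ne_zero
  push_cast
  field_simp
  ring

def hypPartial (N : ℕ) : ℝ⟦X⟧ :=
  ∑ k ∈ range N, C (hypCoeff lam k) * oneSubDegExp lam ^ k

theorem hypPartial_succ (N : ℕ) :
    hypPartial lam (N + 1) = hypPartial lam N + C (hypCoeff lam N) * oneSubDegExp lam ^ N :=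
  sum_range_succ _ _

/-- Truncating `₂F₁(1-λ, 1; 1; 1 - e_λ(t))` spoils the equation `(1 + λt) F' = (λ - 1) F` of
`e_λ^{λ-1}(t)` only by a multiple of `(1 - e_λ(t))^N`. -/
theorem hypPartial_ode (N : ℕ) :
    (1 + C lam * X) * d⁄dX ℝ (hypPartial lam (N + 1)) =
      C (lam - 1) * hypPartial lam N + C (N * hypCoeff lam N) * oneSubDegExp lam ^ N := by
  induction N with
  | zero => simp [hypPartial, hypCoeff, rising]
  | succ N ih =>
    have hc := congrArg C (hypCoeff_succ lam N)
    rw [hypPartial_succ lam (N + 1), map_add, mul_add, ih, Derivation.leibniz, derivative_C,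
      smul_zero, add_zero, smul_eq_mul, mul_left_comm, oneSubDegExp_pow_succ_ode, hypPartial_succ]
    simp only [map_mul, map_natCast, map_add, map_one, map_sub, Nat.cast_succ] at hc ⊢
    linear_combination -oneSubDegExp lam ^ N * hc

theorem coeff_hypPartial_of_lt {n N : ℕ} (h : n < N) :
    coeff n (hypPartial lam N) = coeff n (hypPartial lam (n + 1)) := by
  induction N, h using Nat.le_induction with
  | base => rfl
  | succ N hN ih =>
    rw [← ih, hypPartial_succ, map_add, coeff_C_mul, coeff_oneSubDegExp_pow_of_lt lam hN,
      mul_zero, add_zero]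

theorem coeff_hypPartial (n : ℕ) :
    coeff n (hypPartial lam (n + 1)) = dfall (lam - 1) n lam / n.factorial := by
  induction n with
  | zero => simp [hypPartial, hypCoeff, rising, dfall]
  | succ n ih =>
    have h := congrArg (coeff n) (hypPartial_ode lam (n + 1))
    rw [coeff_one_add_C_mul_X_mul_derivative, map_add, coeff_C_mul, coeff_C_mul,
      coeff_hypPartial_of_lt lam (by omega : n < n + 1 + 1),
      coeff_oneSubDegExp_pow_of_lt lam n.lt_succ_self, ih] at h
    rw [dfall_succ, Nat.factorial_succ]
    have := n.factorial_ne_zero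
    push_cast
    field_simp at h ⊢
    linear_combination h

end DegenerateBernoulli

open DegenerateBernoulli in
theorem stmt4 (lam : ℝ) (n : ℕ) :
    genBeta lam (-1) n = dfall (lam - 1) n lam := by
  have hp : ((-1 : ℤ) : ℝ) + 2 = 1 := by norm_num
  have hterm (k : ℕ) : rising (1 - lam) k * rising 1 k / (rising 1 k * k.factorial) =
      hypCoeff lam k := by
    rw [rising_one, hypCoeff, mul_div_mul_right _ _ (Nat.cast_ne_zero.2 k.factorial_ne_zero)]
  have hsum : ∑ k ∈ range (n + 1), (rising (1 - lam) k * rising 1 k /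
      (rising 1 k * k.factorial)) • (1 - degExp lam 1) ^ k = hypPartial lam (n + 1) := by
    simp only [hterm, smul_eq_C_mul, hypPartial]
  rw [genBeta, genBetaPoly, degExp_zero, mul_one, hp, hsum, coeff_hypPartial,
    mul_div_cancel₀ _ (Nat.cast_ne_zero.2 n.factorial_ne_zero)]
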